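/- arXiv:1908.09135 — 5 statements merged into one kernel-verified Lean document; each statement's English description precedes it below -/
import Mathlib

section
/- The interpolation is exact on the given collection: g_C(C_i) = f(C_i) for every i = 1,…,m. -/
/-!
Edmonds' greedy vector: order the elements of `Cᵢ` and give each one its marginal gain
`f(Cᵢ ∩ {≤ i}) - f(Cᵢ ∩ {< i})`. The gains telescope to `f(Cᵢ)`, are nonnegative by monotonicity,
and by diminishing returns their sum over any `A` is at most `f(Cᵢ ∩ A) ≤ f(A)`. So this vector
lies in `P_C(f)` and attains `f(Cᵢ)` on `Cᵢ`, while every `z ∈ P_C(f)` has `z(Cᵢ) ≤ f(Cᵢ)`.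
-/

open Finset

variable {α β : Type*}

theorem insert_sub_le_insert_sub_of_submodular [DecidableEq α] [AddCommGroup β] [PartialOrder β]
    [IsOrderedAddMonoid β]
    {f : Finset α → β} (hf : ∀ S T, f (S ∪ T) + f (S ∩ T) ≤ f S + f T) {X Y : Finset α} {i : α}
    (hXY : X ⊆ Y) (hi : i ∉ Y) : f (insert i Y) - f Y ≤ f (insert i X) - f X := by
  have h := hf (insert i X) Y
  rw [insert_union, union_eq_right.2 hXY, insert_inter_of_notMem hi, inter_eq_left.2 hXY] at h
  exact sub_le_sub_iff.2 h

section Greedy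

variable [LinearOrder α]

def greedyVector [AddCommGroup β] (f : Finset α → β) (S : Finset α) (i : α) : β :=
  if i ∈ S then f (insert i (S.filter (· < i))) - f (S.filter (· < i)) else 0

theorem sum_greedyVector_self [AddCommGroup β] (f : Finset α → β) (S : Finset α) :
    ∑ i ∈ S, greedyVector f S i = f S - f ∅ := by
  induction S using Finset.induction_on_max with
  | empty => simp
  | insert a s has ih =>
    have hfilter : ∀ i ∈ s, (insert a s).filter (· < i) = s.filter (· < i) := fun i hi => by
      rw [filter_insert, if_neg (has i hi).not_gt]
    have hrest : ∑ i ∈ s, greedyVector f (insert a s) i = ∑ i ∈ s, greedyVector f s i :=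
      sum_congr rfl fun i hi => by
        simp only [greedyVector, if_pos (mem_insert_of_mem hi), if_pos hi, hfilter i hi]
    have hnew : (insert a s).filter (· < a) = s := by
      rw [filter_insert, if_neg (lt_irrefl a), filter_true_of_mem has]
    have ha : a ∉ s := fun h => lt_irrefl a (has a h)
    rw [sum_insert ha, hrest, ih, greedyVector, if_pos (mem_insert_self a s), hnew]
    abel

theorem greedyVector_nonneg [AddCommGroup β] [PartialOrder β] [IsOrderedAddMonoid β]
    {f : Finset α → β} (hf : Monotone f) (S : Finset α) (i : α) : 0 ≤ greedyVector f S i := by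
  unfold greedyVector
  split_ifs
  · exact sub_nonneg.2 (hf (subset_insert _ _))
  · exact le_rfl

theorem greedyVector_le_greedyVector_inter [AddCommGroup β] [PartialOrder β]
    [IsOrderedAddMonoid β] {f : Finset α → β}
    (hf : ∀ S T, f (S ∪ T) + f (S ∩ T) ≤ f S + f T) {S A : Finset α} {i : α} (hi : i ∈ S ∩ A) :
    greedyVector f S i ≤ greedyVector f (S ∩ A) i := by
  rw [greedyVector, greedyVector, if_pos (mem_inter.1 hi).1, if_pos hi]
  exact insert_sub_le_insert_sub_of_submodular hf (filter_subset_filter _ inter_subset_left)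
    (by simp)

theorem sum_greedyVector_le [AddCommGroup β] [PartialOrder β] [IsOrderedAddMonoid β]
    {f : Finset α → β} (hf : ∀ S T, f (S ∪ T) + f (S ∩ T) ≤ f S + f T) (S A : Finset α) :
    ∑ i ∈ A, greedyVector f S i ≤ f (S ∩ A) - f ∅ := by
  have hzero : ∀ i ∈ A, i ∉ S ∩ A → greedyVector f S i = 0 := fun i hiA hi =>
    if_neg fun hiS => hi (mem_inter.2 ⟨hiS, hiA⟩)
  calc ∑ i ∈ A, greedyVector f S i = ∑ i ∈ S ∩ A, greedyVector f S i :=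
        (sum_subset inter_subset_right hzero).symm
    _ ≤ ∑ i ∈ S ∩ A, greedyVector f (S ∩ A) i :=
        sum_le_sum fun i hi => greedyVector_le_greedyVector_inter hf hi
    _ = f (S ∩ A) - f ∅ := sum_greedyVector_self f (S ∩ A)

end Greedy

/-- The interpolation is exact on the given collection: `g_C(C_i) = f(C_i)` for each
member `C_i` of the collection. -/
theorem imitated_lovasz_exact_on_collection {n : ℕ} (f : Finset (Fin n) → ℝ)
    (C : Finset (Finset (Fin n)))
    (hnorm : f ∅ = 0)
    (hmono : ∀ S T : Finset (Fin n), S ⊆ T → f S ≤ f T)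
    (hsubmod : ∀ S T : Finset (Fin n), f (S ∪ T) + f (S ∩ T) ≤ f S + f T)
    (PC : Set (Fin n → ℝ))
    (hPC : PC = { z | (∀ i, 0 ≤ z i) ∧ ∀ Ci ∈ C, ∑ i ∈ Ci, z i ≤ f Ci }) :
    ∀ Ci ∈ C, ∀ gCCi : ℝ,
      IsGreatest { t : ℝ | ∃ z ∈ PC, t = ∑ i ∈ Ci, z i } gCCi → gCCi = f Ci := by
  intro Ci hCi gCCi ⟨⟨w, hw, hgw⟩, hgreatest⟩
  rw [hPC] at hw
  have hgreedy_mem : greedyVector f Ci ∈ PC := by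
    rw [hPC]
    refine ⟨greedyVector_nonneg (fun S T h => hmono S T h) Ci, fun Cj _ => ?_⟩
    calc ∑ i ∈ Cj, greedyVector f Ci i ≤ f (Ci ∩ Cj) - f ∅ := sum_greedyVector_le hsubmod Ci Cj
      _ ≤ f Cj := by rw [hnorm, sub_zero]; exact hmono _ _ inter_subset_right
  refine le_antisymm (hgw ▸ hw.2 Ci hCi) (hgreatest ⟨_, hgreedy_mem, ?_⟩)
  rw [sum_greedyVector_self, hnorm, sub_zero]
end

section
/- The explicit function f(S) = (7 − |S|)·|S| on subsets of V = {1,2,3} is submodular and nondecreasing, but its subadditive interpolation g_C with C = 2^V \ {V} is not submodular: g_C({1}) = 6, g_C({1,2}) = g_C({1,3}) = 10, and g_C({1,2,3}) = 15, so g_C({1,2}) + g_C({1,3}) < g_C({1,2,3}) + g_C({1}). -/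
/-!
`f` is a concave function of the cardinality, hence submodular. The constraints of `P_C(f)`
only bound singletons by `6` and pairs by `10`. Hence `g_C(S) = f(S)` for proper `S`,
attained at `(6, 4, 0)` and `(6, 0, 4)`; and summing the three pair constraints bounds
`2 (z₁ + z₂ + z₃)` by `30`, so `g_C(V) = 15`, attained at `(5, 5, 5)`. Then `10 + 10 < 15 + 6`.
-/

open Finset

variable {α : Type*}

def cardQuadratic (c : ℝ) (S : Finset α) : ℝ := (c - #S) * #S

-- `properPolytope f` is `P_C(f)` and `interpolation f` is `g_C`, for `C` the proper subsets.
def properPolytope [Fintype α] (f : Finset α → ℝ) : Set (α → ℝ) :=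
  {z | (∀ i, 0 ≤ z i) ∧ ∀ C : Finset α, C ≠ univ → ∑ i ∈ C, z i ≤ f C}

noncomputable def interpolation [Fintype α] (f : Finset α → ℝ) (S : Finset α) : ℝ :=
  sSup {t | ∃ z ∈ properPolytope f, t = ∑ i ∈ S, z i}

theorem cardQuadratic_submodular [DecidableEq α] (c : ℝ) (S T : Finset α) :
    cardQuadratic c (S ∪ T) + cardQuadratic c (S ∩ T) ≤
      cardQuadratic c S + cardQuadratic c T := by
  have hS : (#S : ℝ) ≤ #(S ∪ T) := mod_cast card_le_card subset_union_left
  have hT : (#T : ℝ) ≤ #(S ∪ T) := mod_cast card_le_card subset_union_right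
  have hinter : (#(S ∩ T) : ℝ) = #S + #T - #(S ∪ T) := by
    have : #(S ∪ T) + #(S ∩ T) = #S + #T := card_union_add_card_inter S T
    rw [eq_sub_iff_add_eq']
    exact_mod_cast this
  unfold cardQuadratic
  rw [hinter]
  -- the difference of the two sides is `2 (#(S ∪ T) - #S) (#(S ∪ T) - #T)`
  nlinarith [mul_nonneg (sub_nonneg.2 hS) (sub_nonneg.2 hT)]

theorem cardQuadratic_mono [Fintype α] {c : ℝ} (hc : 2 * Fintype.card α ≤ c) :
    Monotone (cardQuadratic (α := α) c) := by
  intro S T hST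
  have hST' : (#S : ℝ) ≤ #T := mod_cast card_le_card hST
  have hT : (#T : ℝ) ≤ Fintype.card α := mod_cast card_le_univ T
  unfold cardQuadratic
  nlinarith

theorem card_sub_one_mul_sum_le_of_mem_properPolytope [Fintype α] [DecidableEq α]
    {f : Finset α → ℝ} {z : α → ℝ} (hz : z ∈ properPolytope f) :
    (Fintype.card α - 1) * ∑ i, z i ≤ ∑ i, f (univ.erase i) :=
  calc (Fintype.card α - 1) * ∑ i, z i = ∑ i, ∑ j ∈ univ.erase i, z j := by
        simp only [sum_erase_eq_sub (mem_univ _), sum_sub_distrib, sum_const, card_univ,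
          nsmul_eq_mul]
        ring
    _ ≤ ∑ i, f (univ.erase i) :=
        sum_le_sum fun i _ => hz.2 _ (erase_ssubset (mem_univ i)).ne

theorem interpolation_eq [Fintype α] {f : Finset α → ℝ} {S : Finset α} {v : ℝ} {z₀ : α → ℝ}
    (hz₀ : z₀ ∈ properPolytope f) (h₀ : ∑ i ∈ S, z₀ i = v)
    (hle : ∀ z ∈ properPolytope f, ∑ i ∈ S, z i ≤ v) : interpolation f S = v :=
  IsGreatest.csSup_eq ⟨⟨z₀, hz₀, h₀.symm⟩, by rintro _ ⟨z, hz, rfl⟩; exact hle z hz⟩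

theorem interpolation_eq_of_ne_univ [Fintype α] {f : Finset α → ℝ} {S : Finset α} {v : ℝ}
    (hS : S ≠ univ) {z₀ : α → ℝ} (hz₀ : z₀ ∈ properPolytope f) (h₀ : ∑ i ∈ S, z₀ i = v)
    (hv : f S = v) : interpolation f S = v :=
  interpolation_eq hz₀ h₀ fun _ hz => hv ▸ hz.2 S hS

theorem mem_properPolytope_cardQuadratic_seven [Fintype α] [DecidableEq α]
    (hα : Fintype.card α ≤ 3) {z : α → ℝ}
    (h0 : ∀ i, 0 ≤ z i) (h1 : ∀ i, z i ≤ 6) (h2 : ∀ i j, i ≠ j → z i + z j ≤ 10) :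
    z ∈ properPolytope (cardQuadratic 7) := by
  refine ⟨h0, fun C hC => ?_⟩
  have hC : #C < 3 := (card_lt_card (ssubset_univ_iff.2 hC)).trans_le (by simpa using hα)
  obtain h | h | h : #C = 0 ∨ #C = 1 ∨ #C = 2 := by omega
  · simp [card_eq_zero.1 h, cardQuadratic]
  · obtain ⟨a, rfl⟩ := card_eq_one.1 h
    rw [sum_singleton, cardQuadratic, card_singleton]
    push_cast
    linarith [h1 a]
  · obtain ⟨a, b, hab, rfl⟩ := card_eq_two.1 h
    rw [sum_pair hab, cardQuadratic, card_pair hab]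
    push_cast
    linarith [h2 a b hab]

theorem interpolation_cardQuadratic_seven_univ :
    interpolation (cardQuadratic 7) (univ : Finset (Fin 3)) = 15 := by
  have h555 : ![5, 5, 5] ∈ properPolytope (cardQuadratic 7) :=
    mem_properPolytope_cardQuadratic_seven (by simp) (by norm_num [Fin.forall_fin_succ])
      (by norm_num [Fin.forall_fin_succ]) (by norm_num [Fin.forall_fin_succ])
  refine interpolation_eq h555 (by norm_num [Fin.sum_univ_three, Matrix.cons_val_two])
    fun z hz => ?_
  have := card_sub_one_mul_sum_le_of_mem_properPolytope hz
  norm_num [cardQuadratic, card_erase_of_mem] at this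
  linarith

/-- The function `f(S) = (7 − |S|)|S|` on subsets of a 3-element set is submodular and
nondecreasing, but its subadditive interpolation `g_C` (with `C` the proper subsets)
is not submodular: `g_C({1}) = 6`, `g_C({1,2}) = g_C({1,3}) = 10`,
`g_C({1,2,3}) = 15`, so `g_C({1,2}) + g_C({1,3}) < g_C({1,2,3}) + g_C({1})`. -/
theorem interpolation_not_submodular (f : Finset (Fin 3) → ℝ)
    (hf : ∀ S : Finset (Fin 3), f S = (7 - (S.card : ℝ)) * (S.card : ℝ))
    (PC : Set (Fin 3 → ℝ))
    (hPC : PC = { z | (∀ i, 0 ≤ z i) ∧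
      ∀ C : Finset (Fin 3), C ≠ Finset.univ → ∑ i ∈ C, z i ≤ f C })
    (gC : Finset (Fin 3) → ℝ)
    (hgC : ∀ S : Finset (Fin 3), gC S = sSup { t : ℝ | ∃ z ∈ PC, t = ∑ i ∈ S, z i }) :
    (∀ S T : Finset (Fin 3), S ⊆ T → f S ≤ f T) ∧
    (∀ S T : Finset (Fin 3), f (S ∪ T) + f (S ∩ T) ≤ f S + f T) ∧
    gC {0} = 6 ∧ gC {0, 1} = 10 ∧ gC {0, 2} = 10 ∧ gC Finset.univ = 15 ∧
    gC {0, 1} + gC {0, 2} < gC Finset.univ + gC {0} := by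
  obtain rfl : f = cardQuadratic 7 := funext hf
  have hg : gC = interpolation (cardQuadratic 7) := funext fun S => by rw [hgC, hPC]; rfl
  obtain ⟨h640, h604⟩ : ![6, 4, 0] ∈ properPolytope (cardQuadratic 7) ∧
      ![6, 0, 4] ∈ properPolytope (cardQuadratic 7) := by
    refine ⟨?_, ?_⟩ <;> apply mem_properPolytope_cardQuadratic_seven (by simp) <;>
      norm_num [Fin.forall_fin_succ]
  have g0 : gC {0} = 6 := by
    rw [hg]
    exact interpolation_eq_of_ne_univ (by decide) h640 (by simp)
      (by rw [cardQuadratic, card_singleton]; norm_num)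
  have g01 : gC {0, 1} = 10 := by
    rw [hg]
    exact interpolation_eq_of_ne_univ (by decide) h640
      (by rw [sum_pair (by decide)]; norm_num)
      (by rw [cardQuadratic, card_pair (by decide)]; norm_num)
  have g02 : gC {0, 2} = 10 := by
    rw [hg]
    exact interpolation_eq_of_ne_univ (by decide) h604
      (by rw [sum_pair (by decide)]; norm_num [Matrix.cons_val_two])
      (by rw [cardQuadratic, card_pair (by decide)]; norm_num)
  have guniv : gC univ = 15 := hg ▸ interpolation_cardQuadratic_seven_univ
  refine ⟨fun _ _ h => cardQuadratic_mono (by norm_num) h, cardQuadratic_submodular 7,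
    g0, g01, g02, guniv, ?_⟩
  rw [g0, g01, g02, guniv]
  norm_num
end

section
/- Non-uniform curvature sandwich: for a normalized nondecreasing subadditive set function g with g({i}) > 0 for all i, and for any S ⊆ V with 0 < κ_g(S) < 1, one has g(S) ≤ Σ_{i∈S} g({i}) ≤ (|S| / (1 + (|S| − 1)(1 − κ_g(S))))·g(S). -/
/-- The curvature of a set function `g` at `S`:
`κ_g(S) = 1 − min_{A ⊆ S, i ∈ A} (g(A) − g(A \ {i})) / g({i})`. -/
noncomputable def curvature {V : Type*} [DecidableEq V] (g : Finset V → ℝ)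
    (S : Finset V) : ℝ :=
  1 - sInf { r : ℝ | ∃ (A : Finset V) (i : V), i ∈ A ∧ A ⊆ S ∧
    r = (g A - g (A.erase i)) / g {i} }

/-!
Every marginal `g A - g (A \ {i})` with `A ⊆ S` is at least `c · g({i})`, where
`c = 1 - κ_g(S)`. Peeling the elements of `S \ {j}` off `S` one at a time therefore gives
`g({j}) + c · Σ_{i ∈ S \ {j}} g({i}) ≤ g(S)` for each `j ∈ S`, and averaging over `j` yields
`(1 + (|S| - 1) c) · Σ_{i ∈ S} g({i}) ≤ |S| · g(S)`. The lower bound is plain subadditivity.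
-/

open Finset

namespace SetFunction

variable {V : Type*} [DecidableEq V] {g : Finset V → ℝ}

theorem le_sum_singleton_of_subadditive (hnorm : g ∅ = 0)
    (hsub : ∀ S T : Finset V, g (S ∪ T) ≤ g S + g T) (T : Finset V) :
    g T ≤ ∑ i ∈ T, g {i} := by
  induction T using Finset.induction_on with
  | empty => simp [hnorm]
  | insert a s ha ih =>
    rw [sum_insert ha, insert_eq]
    linarith [hsub {a} s]

theorem one_sub_curvature_mul_le_marginal (hmono : ∀ S T : Finset V, S ⊆ T → g S ≤ g T)
    (hpos : ∀ i : V, 0 < g {i}) {S A : Finset V} (hAS : A ⊆ S) {i : V} (hi : i ∈ A) :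
    (1 - curvature g S) * g {i} ≤ g A - g (A.erase i) := by
  have hbdd : BddBelow { r : ℝ | ∃ (A : Finset V) (i : V), i ∈ A ∧ A ⊆ S ∧
      r = (g A - g (A.erase i)) / g {i} } := by
    refine ⟨0, ?_⟩
    rintro r ⟨A, i, -, -, rfl⟩
    exact div_nonneg (sub_nonneg.2 (hmono _ _ (erase_subset i A))) (hpos i).le
  rw [curvature, sub_sub_cancel, ← le_div_iff₀ (hpos i)]
  exact csInf_le hbdd ⟨A, i, hi, hAS, rfl⟩

variable {c : ℝ} {S : Finset V}

theorem sdiff_add_mul_sum_le (hmarg : ∀ A ⊆ S, ∀ i ∈ A, c * g {i} ≤ g A - g (A.erase i))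
    {T : Finset V} (hT : T ⊆ S) : g (S \ T) + c * ∑ i ∈ T, g {i} ≤ g S := by
  induction T using Finset.induction_on with
  | empty => simp
  | insert a s ha ih =>
    have haS : a ∈ S \ s := mem_sdiff.2 ⟨hT (mem_insert_self a s), ha⟩
    have hstep := hmarg (S \ s) sdiff_subset a haS
    rw [← sdiff_insert] at hstep
    rw [sum_insert ha]
    linarith [ih ((subset_insert a s).trans hT)]

theorem one_add_card_sub_one_mul_sum_le
    (hmarg : ∀ A ⊆ S, ∀ i ∈ A, c * g {i} ≤ g A - g (A.erase i)) :
    (1 + ((#S : ℝ) - 1) * c) * ∑ i ∈ S, g {i} ≤ #S * g S := by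
  have hpeel : ∀ j ∈ S, g {j} + c * (∑ i ∈ S, g {i} - g {j}) ≤ g S := by
    intro j hj
    have h := sdiff_add_mul_sum_le hmarg (erase_subset j S)
    rwa [sdiff_erase_self hj, sum_erase_eq_sub hj] at h
  have hsum := sum_le_sum hpeel
  simp only [sum_add_distrib, ← mul_sum, sum_sub_distrib, sum_const, nsmul_eq_mul] at hsum
  linarith

end SetFunction

theorem nonuniform_curvature_sandwich_general {V : Type*} [DecidableEq V]
    (g : Finset V → ℝ)
    (hnorm : g ∅ = 0)
    (hmono : ∀ S T : Finset V, S ⊆ T → g S ≤ g T)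
    (hsub : ∀ S T : Finset V, g (S ∪ T) ≤ g S + g T)
    (hpos : ∀ i : V, 0 < g {i}) :
    ∀ S : Finset V, 0 < curvature g S → curvature g S < 1 →
      g S ≤ ∑ i ∈ S, g {i} ∧
      ∑ i ∈ S, g {i} ≤
        ((S.card : ℝ) / (1 + ((S.card : ℝ) - 1) * (1 - curvature g S))) * g S := by
  intro S hκ0 hκ1
  refine ⟨SetFunction.le_sum_singleton_of_subadditive hnorm hsub S, ?_⟩
  have hden : 0 < 1 + ((#S : ℝ) - 1) * (1 - curvature g S) := by
    nlinarith [mul_nonneg (Nat.cast_nonneg (α := ℝ) #S) (sub_nonneg.2 hκ1.le)]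
  rw [div_mul_eq_mul_div, le_div_iff₀ hden, mul_comm]
  exact SetFunction.one_add_card_sub_one_mul_sum_le fun A hAS i hi =>
    SetFunction.one_sub_curvature_mul_le_marginal hmono hpos hAS hi

/-- Non-uniform curvature sandwich. -/
theorem nonuniform_curvature_sandwich {V : Type*} [DecidableEq V] [Fintype V]
    (g : Finset V → ℝ)
    (hnorm : g ∅ = 0)
    (hmono : ∀ S T : Finset V, S ⊆ T → g S ≤ g T)
    (hsub : ∀ S T : Finset V, g (S ∪ T) ≤ g S + g T)
    (hpos : ∀ i : V, 0 < g {i}) :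
    ∀ S : Finset V, 0 < curvature g S → curvature g S < 1 →
      g S ≤ ∑ i ∈ S, g {i} ∧
      ∑ i ∈ S, g {i} ≤
        ((S.card : ℝ) / (1 + ((S.card : ℝ) - 1) * (1 - curvature g S))) * g S :=
  nonuniform_curvature_sandwich_general g hnorm hmono hsub hpos
end

section
/- Approximation factor of the initial partition: let g₁,…,g_m be normalized nondecreasing subadditive functions with g_j({i}) > 0 for all i, j. Let S* = (S*₁,…,S*_m) be an m-partition of V minimizing max_j g_j(S_j), and let S⁰ = (S⁰₁,…,S⁰_m) be an m-partition minimizing max_j Σ_{i∈S_j} g_j({i}). Then max_j g_j(S⁰_j) ≤ (max_j |S*_j| / (1 + (|S*_j| − 1)(1 − κ_{g_j}(S*_j)))) · max_j g_j(S*_j). -/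
/-- An `ι`-indexed partition of the ground set: pairwise disjoint blocks covering everything. -/
def IsPartition {V ι : Type*} [DecidableEq V] [Fintype V] [DecidableEq ι] [Fintype ι]
    (S : ι → Finset V) : Prop :=
  (∀ j k : ι, j ≠ k → Disjoint (S j) (S k)) ∧ Finset.univ.biUnion S = Finset.univ

open Finset

noncomputable def curvatureFactor {V : Type*} [DecidableEq V] (g : Finset V → ℝ)
    (S : Finset V) : ℝ :=
  (#S : ℝ) / (1 + ((#S : ℝ) - 1) * (1 - curvature g S))

lemma one_le_one_add_card_sub_one_mul {α : Type*} {S : Finset α} (hS : S.Nonempty) {c : ℝ}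
    (hc : 0 ≤ c) :
    1 ≤ 1 + ((#S : ℝ) - 1) * c :=
  le_add_of_nonneg_right <| mul_nonneg (sub_nonneg.2 (by exact_mod_cast hS.card_pos)) hc

section SetFunction

variable {V : Type*} [DecidableEq V] {g : Finset V → ℝ}

lemma le_sum_singleton_of_subadditive (h0 : g ∅ = 0)
    (hsub : ∀ S T, g (S ∪ T) ≤ g S + g T) (A : Finset V) :
    g A ≤ ∑ i ∈ A, g {i} := by
  induction A using Finset.induction_on with
  | empty => simp [h0]
  | insert a s ha ih =>
    rw [sum_insert ha, insert_eq]
    linarith [hsub {a} s]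

def marginalRatios (g : Finset V → ℝ) (S : Finset V) : Set ℝ :=
  { r : ℝ | ∃ (A : Finset V) (i : V), i ∈ A ∧ A ⊆ S ∧ r = (g A - g (A.erase i)) / g {i} }

lemma one_sub_curvature_eq (S : Finset V) : 1 - curvature g S = sInf (marginalRatios g S) :=
  sub_sub_cancel _ _

lemma marginalRatios_nonneg (hmono : Monotone g) (hpos : ∀ i, 0 < g {i}) (S : Finset V) :
    ∀ r ∈ marginalRatios g S, 0 ≤ r := by
  rintro r ⟨A, i, -, -, rfl⟩
  exact div_nonneg (sub_nonneg.2 (hmono (erase_subset i A))) (hpos i).le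

lemma curvature_le_one (hmono : Monotone g) (hpos : ∀ i, 0 < g {i}) (S : Finset V) :
    curvature g S ≤ 1 :=
  sub_nonneg.1 <| (one_sub_curvature_eq S).symm ▸
    Real.sInf_nonneg (marginalRatios_nonneg hmono hpos S)

lemma one_sub_curvature_mul_le_marginal (hmono : Monotone g) (hpos : ∀ i, 0 < g {i})
    {S A : Finset V} (hAS : A ⊆ S) {i : V} (hi : i ∈ A) :
    (1 - curvature g S) * g {i} ≤ g A - g (A.erase i) := by
  rw [← le_div_iff₀ (hpos i), one_sub_curvature_eq]
  exact csInf_le ⟨0, marginalRatios_nonneg hmono hpos S⟩ ⟨A, i, hi, hAS, rfl⟩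

lemma singleton_add_mul_sum_erase_le {c : ℝ} {S : Finset V}
    (hc : ∀ A ⊆ S, ∀ i ∈ A, c * g {i} ≤ g A - g (A.erase i)) :
    ∀ A ⊆ S, ∀ i₀ ∈ A, g {i₀} + c * ∑ i ∈ A.erase i₀, g {i} ≤ g A := by
  intro A
  induction A using Finset.strongInduction with
  | H A ih =>
    intro hAS i₀ hi₀
    obtain hA | ⟨i, hi⟩ := (A.erase i₀).eq_empty_or_nonempty
    · rw [hA, sum_empty, mul_zero, add_zero, ← insert_erase hi₀, hA, insert_empty]
    · have hiA : i ∈ A := mem_of_mem_erase hi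
      have hi₀i : i₀ ∈ A.erase i := mem_erase.2 ⟨(ne_of_mem_erase hi).symm, hi₀⟩
      have hpeel := ih (A.erase i) (erase_ssubset hiA) ((erase_subset i A).trans hAS) i₀ hi₀i
      rw [erase_right_comm] at hpeel
      rw [← add_sum_erase _ _ hi]
      linarith [hc A hAS i hiA]

lemma one_add_card_sub_one_mul_sum_le {c : ℝ} {S : Finset V}
    (hc : ∀ A ⊆ S, ∀ i ∈ A, c * g {i} ≤ g A - g (A.erase i)) :
    (1 + ((#S : ℝ) - 1) * c) * ∑ i ∈ S, g {i} ≤ #S * g S := by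
  have hsum := sum_le_sum fun i₀ hi₀ => singleton_add_mul_sum_erase_le hc S subset_rfl i₀ hi₀
  rw [sum_add_distrib, ← mul_sum, sum_congr rfl fun i₀ hi₀ => sum_erase_eq_sub hi₀,
    sum_sub_distrib, sum_const, sum_const, nsmul_eq_mul, nsmul_eq_mul] at hsum
  linarith

lemma curvatureFactor_nonneg (hmono : Monotone g) (hpos : ∀ i, 0 < g {i}) (S : Finset V) :
    0 ≤ curvatureFactor g S := by
  obtain rfl | hS := S.eq_empty_or_nonempty
  · simp [curvatureFactor]
  · exact div_nonneg (Nat.cast_nonneg _) <| zero_le_one.trans <|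
      one_le_one_add_card_sub_one_mul hS (sub_nonneg.2 (curvature_le_one hmono hpos S))

lemma sum_singleton_le_curvatureFactor_mul (hmono : Monotone g) (hpos : ∀ i, 0 < g {i})
    (S : Finset V) :
    ∑ i ∈ S, g {i} ≤ curvatureFactor g S * g S := by
  obtain rfl | hS := S.eq_empty_or_nonempty
  · simp [curvatureFactor]
  have hden := one_le_one_add_card_sub_one_mul hS (sub_nonneg.2 (curvature_le_one hmono hpos S))
  rw [curvatureFactor, div_mul_eq_mul_div, le_div_iff₀ (by linarith), mul_comm]
  exact one_add_card_sub_one_mul_sum_le fun A hAS i hi =>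
    one_sub_curvature_mul_le_marginal hmono hpos hAS hi

end SetFunction

theorem initial_partition_curvature_bound_general {V ι : Type*}
    [DecidableEq V] [Fintype V] [DecidableEq ι] [Fintype ι] [Nonempty ι]
    (g : ι → Finset V → ℝ)
    (hnorm : ∀ j, g j ∅ = 0)
    (hmono : ∀ j, ∀ S T : Finset V, S ⊆ T → g j S ≤ g j T)
    (hsub : ∀ j, ∀ S T : Finset V, g j (S ∪ T) ≤ g j S + g j T)
    (hpos : ∀ j, ∀ i : V, 0 < g j {i})
    (Sstar S0 : ι → Finset V)
    (hSstar : IsPartition Sstar)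
    (hS0Opt : ∀ T : ι → Finset V, IsPartition T →
      Finset.univ.sup' Finset.univ_nonempty (fun j => ∑ i ∈ S0 j, g j {i}) ≤
        Finset.univ.sup' Finset.univ_nonempty (fun j => ∑ i ∈ T j, g j {i})) :
    Finset.univ.sup' Finset.univ_nonempty (fun j => g j (S0 j)) ≤
      (Finset.univ.sup' Finset.univ_nonempty (fun j =>
        ((Sstar j).card : ℝ) /
          (1 + (((Sstar j).card : ℝ) - 1) * (1 - curvature (g j) (Sstar j))))) *
      Finset.univ.sup' Finset.univ_nonempty (fun j => g j (Sstar j)) := by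
  have hmono' (j : ι) : Monotone (g j) := hmono j
  calc univ.sup' univ_nonempty (fun j => g j (S0 j))
      ≤ univ.sup' univ_nonempty (fun j => ∑ i ∈ S0 j, g j {i}) :=
        sup'_mono_fun fun j _ => le_sum_singleton_of_subadditive (hnorm j) (hsub j) (S0 j)
    _ ≤ univ.sup' univ_nonempty (fun j => ∑ i ∈ Sstar j, g j {i}) := hS0Opt Sstar hSstar
    _ ≤ univ.sup' univ_nonempty (fun j => curvatureFactor (g j) (Sstar j) * g j (Sstar j)) :=
        sup'_mono_fun fun j _ => sum_singleton_le_curvatureFactor_mul (hmono' j) (hpos j) _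
    _ ≤ _ :=
        sup'_mul_le_mul_sup'_of_nonneg (fun j _ => curvatureFactor_nonneg (hmono' j) (hpos j) _)
          (fun j _ => hnorm j ▸ hmono j ∅ _ (empty_subset _)) _

/-- Approximation factor of the initial partition for nondecreasing subadditive
load balancing. -/
theorem initial_partition_curvature_bound {V ι : Type*}
    [DecidableEq V] [Fintype V] [DecidableEq ι] [Fintype ι] [Nonempty ι]
    (g : ι → Finset V → ℝ)
    (hnorm : ∀ j, g j ∅ = 0)
    (hmono : ∀ j, ∀ S T : Finset V, S ⊆ T → g j S ≤ g j T)
    (hsub : ∀ j, ∀ S T : Finset V, g j (S ∪ T) ≤ g j S + g j T)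
    (hpos : ∀ j, ∀ i : V, 0 < g j {i})
    (Sstar S0 : ι → Finset V)
    (hSstar : IsPartition Sstar)
    (hSstarOpt : ∀ T : ι → Finset V, IsPartition T →
      Finset.univ.sup' Finset.univ_nonempty (fun j => g j (Sstar j)) ≤
        Finset.univ.sup' Finset.univ_nonempty (fun j => g j (T j)))
    (hS0 : IsPartition S0)
    (hS0Opt : ∀ T : ι → Finset V, IsPartition T →
      Finset.univ.sup' Finset.univ_nonempty (fun j => ∑ i ∈ S0 j, g j {i}) ≤
        Finset.univ.sup' Finset.univ_nonempty (fun j => ∑ i ∈ T j, g j {i}))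
    (hcurv : ∀ j, (Sstar j).Nonempty →
      0 < curvature (g j) (Sstar j) ∧ curvature (g j) (Sstar j) < 1) :
    Finset.univ.sup' Finset.univ_nonempty (fun j => g j (S0 j)) ≤
      (Finset.univ.sup' Finset.univ_nonempty (fun j =>
        ((Sstar j).card : ℝ) /
          (1 + (((Sstar j).card : ℝ) - 1) * (1 - curvature (g j) (Sstar j))))) *
      Finset.univ.sup' Finset.univ_nonempty (fun j => g j (Sstar j)) :=
  initial_partition_curvature_bound_general g hnorm hmono hsub hpos Sstar S0 hSstar hS0Opt
end

section
/- Extension of a nonnegative submodular function to a subadditive function with a zeroing element: let U be a finite set, i* ∉ U, V = U ∪ {i*}, and f̃ : 2^U → ℝ nonnegative submodular. Define g : 2^V → ℝ by g(A) = f̃(A) if i* ∉ A and g(A) = 0 if i* ∈ A. Then g is nonnegative and subadditive, and for A ⊆ U, g(A ∪ {i*}) − g(A) = −f̃(A), so minimizing A ↦ g(A ∪ {i*}) − g(A) over A ⊆ U is equivalent to maximizing f̃ over 2^U. -/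
/-!
On sets avoiding `i*` the extension `g` is `f̃` itself, which is subadditive because submodularity
gives `f̃(S ∪ T) ≤ f̃(S) + f̃(T) - f̃(S ∩ T)` and `f̃(S ∩ T) ≥ 0`. If `i* ∈ A ∪ B` then
`g(A ∪ B) = 0`, which is below `g(A) + g(B) ≥ 0`. For `A ⊆ U` the marginal of `i*` is
`0 - f̃(A)`, and negation reverses the order.
-/

namespace Finset

variable {α : Type*} [DecidableEq α]

theorem union_le_add_of_submodular {U : Finset α} {f : Finset α → ℝ}
    (hnn : ∀ S : Finset α, S ⊆ U → 0 ≤ f S)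
    (hsubmod : ∀ S T : Finset α, S ⊆ U → T ⊆ U → f (S ∪ T) + f (S ∩ T) ≤ f S + f T)
    {S T : Finset α} (hS : S ⊆ U) (hT : T ⊆ U) :
    f (S ∪ T) ≤ f S + f T := by
  have hinter : 0 ≤ f (S ∩ T) := hnn _ (inter_subset_left.trans hS)
  linarith [hsubmod S T hS hT]

def zeroingExtension (i : α) (f : Finset α → ℝ) (A : Finset α) : ℝ :=
  if i ∈ A then 0 else f A

variable {i : α} {f : Finset α → ℝ}

theorem zeroingExtension_nonneg (hnn : ∀ A : Finset α, i ∉ A → 0 ≤ f A) (A : Finset α) :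
    0 ≤ zeroingExtension i f A := by
  unfold zeroingExtension
  split_ifs with hA
  exacts [le_rfl, hnn A hA]

theorem zeroingExtension_union_le (hnn : ∀ A : Finset α, i ∉ A → 0 ≤ f A)
    (hsubadd : ∀ A B : Finset α, i ∉ A → i ∉ B → f (A ∪ B) ≤ f A + f B) (A B : Finset α) :
    zeroingExtension i f (A ∪ B) ≤ zeroingExtension i f A + zeroingExtension i f B := by
  by_cases hAB : i ∈ A ∪ B
  · rw [zeroingExtension, if_pos hAB]
    exact add_nonneg (zeroingExtension_nonneg hnn A) (zeroingExtension_nonneg hnn B)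
  · obtain ⟨hA, hB⟩ := not_or.mp (mem_union.not.mp hAB)
    simp only [zeroingExtension, if_neg hAB, if_neg hA, if_neg hB]
    exact hsubadd A B hA hB

theorem zeroingExtension_insert_sub {A : Finset α} (hA : i ∉ A) :
    zeroingExtension i f (insert i A) - zeroingExtension i f A = -f A := by
  simp [zeroingExtension, hA]

end Finset

open Finset in
/-- Extending a nonnegative submodular function on `U = V \ {i*}` by zero on sets
containing `i*` yields a nonnegative subadditive function `g`, whose marginal of `i*`
is `−f̃(A)`, so minimizing `A ↦ g(A ∪ {i*}) − g(A)` is equivalent to maximizing `f̃`. -/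
theorem zeroing_extension_subadditive {W : Type*} [DecidableEq W] [Fintype W]
    (istar : W) (U : Finset W) (hU : U = Finset.univ.erase istar)
    (ft : Finset W → ℝ)
    (hnn : ∀ S : Finset W, S ⊆ U → 0 ≤ ft S)
    (hsubmod : ∀ S T : Finset W, S ⊆ U → T ⊆ U →
      ft (S ∪ T) + ft (S ∩ T) ≤ ft S + ft T)
    (g : Finset W → ℝ)
    (hg : ∀ A : Finset W, g A = if istar ∈ A then 0 else ft A) :
    (∀ A : Finset W, 0 ≤ g A) ∧
    (∀ A B : Finset W, g (A ∪ B) ≤ g A + g B) ∧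
    (∀ A : Finset W, A ⊆ U → g (insert istar A) - g A = -(ft A)) ∧
    (∀ A B : Finset W, A ⊆ U → B ⊆ U →
      ((g (insert istar A) - g A ≤ g (insert istar B) - g B) ↔ ft B ≤ ft A)) := by
  have subset_U_iff (A : Finset W) : A ⊆ U ↔ istar ∉ A := by simp [hU, subset_erase]
  obtain rfl : g = zeroingExtension istar ft := funext hg
  have hnn' (A : Finset W) (hA : istar ∉ A) : 0 ≤ ft A := hnn A ((subset_U_iff A).2 hA)
  have hsubadd (A B : Finset W) (hA : istar ∉ A) (hB : istar ∉ B) : ft (A ∪ B) ≤ ft A + ft B :=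
    union_le_add_of_submodular hnn hsubmod ((subset_U_iff A).2 hA) ((subset_U_iff B).2 hB)
  have hmarg (A : Finset W) (hA : A ⊆ U) :
      zeroingExtension istar ft (insert istar A) - zeroingExtension istar ft A = -ft A :=
    zeroingExtension_insert_sub ((subset_U_iff A).1 hA)
  refine ⟨zeroingExtension_nonneg hnn', zeroingExtension_union_le hnn' hsubadd, hmarg,
    fun A B hA hB => ?_⟩
  rw [hmarg A hA, hmarg B hB, neg_le_neg_iff]
end
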